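/- Let $f: Y \to X$ and $g: Z \to Y$ be finite locally free morphisms of schemes of constant rank, with $g$ of rank $r$. Then the discriminant satisfies $\Delta_{f\circ g} = \mathrm{Nm}_f(\Delta_g) \otimes \Delta_f^{\otimes r}$, under the canonical identification $\det_{\mathcal{O}_X}\mathcal{O}_Z = \mathrm{Nm}_f(\det_{\mathcal{O}_Y}\mathcal{O}_Z) \otimes (\det_{\mathcal{O}_X}\mathcal{O}_Y)^{\otimes r}$. -/

import Mathlib

/-!
By transitivity of the trace, the entry of the trace matrix of `b • c` at `((i, k), (j, l))` is
`Tr_{B/A} (b i * t k l * b j)`, where `t` is the trace matrix of `c`. Hence, up to reordering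
the index, it is the block matrix `diag (G, …, G) * t.map L`, with `G` the trace matrix of `b`
and `L` left multiplication written in the basis `b`. All blocks of `t.map L` lie in the
commutative ring `L(B)`, so its determinant is `det (L (det t)) = Nm_{B/A} (disc c)`
(`Matrix.det_det`), while the block diagonal factor contributes `(det G) ^ r`.
-/

open Matrix

namespace Algebra

variable {A B C : Type*} [CommRing A] [CommRing B] [CommRing C] [Algebra A B]
  {ι κ : Type*} [Fintype ι] [Fintype κ]

theorem traceMatrix_mul_leftMulMatrix_apply [DecidableEq ι] (b : Module.Basis ι A B) (x : B)
    (i j : ι) : (traceMatrix A b * leftMulMatrix b x) i j = trace A B (b i * x * b j) := by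
  have := congrFun (traceMatrix_of_basis_mulVec b (x * b j)) i
  rw [show b i * x * b j = x * b j * b i by ring]
  simpa [mulVec, dotProduct, Matrix.mul_apply, leftMulMatrix_eq_repr_mul] using this

variable [Algebra B C] [Algebra A C] [IsScalarTower A B C]

theorem traceMatrix_smulTower_apply (b : Module.Basis ι A B) (c : Module.Basis κ B C)
    (i j : ι) (k l : κ) :
    traceMatrix A (b.smulTower c) (i, k) (j, l) = trace A B (b i * traceMatrix B c k l * b j) := by
  rw [traceMatrix_apply, traceForm_apply, ← trace_trace_of_basis b c,
    Module.Basis.smulTower_apply, Module.Basis.smulTower_apply, smul_mul_smul_comm,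
    LinearMap.map_smul, traceMatrix_apply, traceForm_apply, smul_eq_mul]
  ring_nf

theorem traceMatrix_smulTower [DecidableEq ι] [DecidableEq κ] (b : Module.Basis ι A B)
    (c : Module.Basis κ B C) :
    traceMatrix A (b.smulTower c) =
      (comp κ κ ι ι A (diagonal (fun _ ↦ traceMatrix A b) *
        (traceMatrix B c).map (leftMulMatrix b))).reindex (.prodComm κ ι) (.prodComm κ ι) := by
  ext ⟨i, k⟩ ⟨j, l⟩
  rw [traceMatrix_smulTower_apply, ← traceMatrix_mul_leftMulMatrix_apply]
  simp

theorem discr_smulTower [DecidableEq ι] [DecidableEq κ] (b : Module.Basis ι A B)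
    (c : Module.Basis κ B C) :
    discr A (b.smulTower c) = norm A (discr B c) * discr A b ^ Fintype.card κ := by
  have det_det_leftMulMatrix :=
    det_det (traceMatrix B c) (leftMulMatrix b : B →+* Matrix ι ι A)
  rw [RingHom.coe_coe] at det_det_leftMulMatrix
  rw [discr_def, traceMatrix_smulTower, det_reindex_self, ← compRingEquiv_apply, map_mul,
    det_mul, compRingEquiv_apply, comp_diagonal, det_reindex_self, det_blockDiagonal,
    compRingEquiv_apply, ← det_det_leftMulMatrix, ← norm_eq_matrix_det, ← discr_def,
    ← discr_def, Finset.prod_const, Finset.card_univ, mul_comm]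

end Algebra

/-- Transitivity of the discriminant, affine version:  for finite free ring extensions
`A ⊆ B ⊆ C`, with `B` free of rank `m` over `A` (basis `b`) and `C` free of rank `r` over `B`
(basis `c`), the discriminant of `C` over `A` with respect to the compatible basis `b • c`
equals the norm (from `B` to `A`) of the discriminant of `C` over `B` times the `r`-th power of
the discriminant of `B` over `A`. -/
theorem statement7 {A B C : Type*} [CommRing A] [CommRing B] [CommRing C]
    [Algebra A B] [Algebra B C] [Algebra A C] [IsScalarTower A B C]
    (m r : ℕ) (b : Module.Basis (Fin m) A B) (c : Module.Basis (Fin r) B C) :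
    Algebra.discr A (b.smulTower c) =
      Algebra.norm A (Algebra.discr B c) * Algebra.discr A b ^ r := by
  simpa using Algebra.discr_smulTower b c
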